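/- Norm bound for the transmutation operator: under the hypotheses of the kernel estimate, the operator T u(x) = u(x) + ∫_{-x}^x K(x,t;h) u(t) dt on C[-b,b] satisfies ‖T‖ ≤ 1 + b(|h| I₀(b√c) + 2√c I₁(b√c)), where c = max_{[-b,b]} |q|, using the pointwise bound |K(x,t;h)| ≤ (|h|/2) I₀(√(c|x²-t²|)) + (1/2)√(c|x²-t²|) I₁(√(c|x²-t²|))/|x−t| and the monotonicity of I₁(x)/x. -/

import Mathlib

/-- Modified Bessel function of the first kind `I₀`. -/
noncomputable def besselI0 (x : ℝ) : ℝ := ∑' k : ℕ, (x / 2) ^ (2 * k) / ((k.factorial : ℝ)) ^ 2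

/-- Modified Bessel function of the first kind `I₁`. -/
noncomputable def besselI1 (x : ℝ) : ℝ :=
  ∑' k : ℕ, (x / 2) ^ (2 * k + 1) / ((k.factorial : ℝ) * ((k + 1).factorial : ℝ))

/-!
Both Bessel functions are power series in `(x/2)²` with nonnegative coefficients (for `I₁` after
factoring out `x/2`), hence monotone in `|x|`; in particular `I₁(s)/s` increases with `s ≥ 0`.
For `s = √(c|x²-t²|)` we have `s² = c|x-t||x+t|`, so the singular term of the kernel estimate is
`s I₁(s)/|x-t| = c|x+t| I₁(s)/s ≤ 2bc I₁(b√c)/(b√c) = 2√c I₁(b√c)`. Off the diagonal the kernel is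
therefore bounded by `|h|/2 I₀(b√c) + √c I₁(b√c)`, and `[-x, x]` has length at most `2b`.
-/

open scoped Nat

open Set

section PowerSeries

variable {a : ℕ → ℝ}

theorem summable_mul_pow_of_abs_le_inv_factorial (ha : ∀ k, |a k| ≤ (k ! : ℝ)⁻¹) (y : ℝ) :
    Summable fun k => a k * y ^ k :=
  (Real.summable_pow_div_factorial |y|).of_norm_bounded fun k => by
    rw [Real.norm_eq_abs, abs_mul, abs_pow, div_eq_inv_mul]
    exact mul_le_mul_of_nonneg_right (ha k) (by positivity)

theorem tsum_mul_pow_nonneg (ha₀ : ∀ k, 0 ≤ a k) {y : ℝ} (hy : 0 ≤ y) :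
    0 ≤ ∑' k, a k * y ^ k :=
  tsum_nonneg fun k => mul_nonneg (ha₀ k) (pow_nonneg hy k)

theorem tsum_mul_pow_le_tsum_mul_pow (ha₀ : ∀ k, 0 ≤ a k) (ha : ∀ k, a k ≤ (k ! : ℝ)⁻¹)
    {y z : ℝ} (hy : 0 ≤ y) (hyz : y ≤ z) : ∑' k, a k * y ^ k ≤ ∑' k, a k * z ^ k := by
  have ha' : ∀ k, |a k| ≤ (k ! : ℝ)⁻¹ := fun k => (abs_of_nonneg (ha₀ k)).trans_le (ha k)
  exact Summable.tsum_le_tsum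
    (fun k => mul_le_mul_of_nonneg_left (pow_le_pow_left₀ hy hyz k) (ha₀ k))
    (summable_mul_pow_of_abs_le_inv_factorial ha' y)
    (summable_mul_pow_of_abs_le_inv_factorial ha' z)

end PowerSeries

/-- The entire function `2 I₁(x) / x`, without the removable singularity at `0`. -/
noncomputable def besselI1Div (x : ℝ) : ℝ :=
  ∑' k : ℕ, ((k ! : ℝ) * (k + 1)!)⁻¹ * ((x / 2) ^ 2) ^ k

theorem besselI0_eq_tsum (x : ℝ) :
    besselI0 x = ∑' k : ℕ, ((k ! : ℝ) ^ 2)⁻¹ * ((x / 2) ^ 2) ^ k := by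
  simp only [besselI0, ← pow_mul, div_eq_inv_mul]

theorem besselI1_eq_mul_besselI1Div (x : ℝ) : besselI1 x = x / 2 * besselI1Div x := by
  rw [besselI1Div, ← tsum_mul_left]
  exact tsum_congr fun k => by rw [pow_succ, pow_mul]; ring

theorem inv_factorial_sq_le (k : ℕ) : ((k ! : ℝ) ^ 2)⁻¹ ≤ (k ! : ℝ)⁻¹ := by
  gcongr
  exact le_self_pow₀ (mod_cast k.factorial_pos) two_ne_zero

theorem inv_factorial_mul_factorial_succ_le (k : ℕ) : ((k ! : ℝ) * (k + 1)!)⁻¹ ≤ (k ! : ℝ)⁻¹ := by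
  gcongr
  exact le_mul_of_one_le_right (by positivity) (mod_cast (k + 1).factorial_pos)

theorem besselI0_nonneg (x : ℝ) : 0 ≤ besselI0 x :=
  besselI0_eq_tsum x ▸ tsum_mul_pow_nonneg (fun k => by positivity) (sq_nonneg _)

theorem besselI1Div_nonneg (x : ℝ) : 0 ≤ besselI1Div x :=
  tsum_mul_pow_nonneg (fun k => by positivity) (sq_nonneg _)

theorem besselI1_nonneg {x : ℝ} (hx : 0 ≤ x) : 0 ≤ besselI1 x :=
  besselI1_eq_mul_besselI1Div x ▸ mul_nonneg (by positivity) (besselI1Div_nonneg x)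

theorem div_two_sq_le_div_two_sq {x y : ℝ} (hxy : |x| ≤ |y|) : (x / 2) ^ 2 ≤ (y / 2) ^ 2 :=
  sq_le_sq.mpr (by rw [abs_div, abs_div]; gcongr)

theorem besselI0_le_besselI0 {x y : ℝ} (hxy : |x| ≤ |y|) : besselI0 x ≤ besselI0 y := by
  rw [besselI0_eq_tsum, besselI0_eq_tsum]
  exact tsum_mul_pow_le_tsum_mul_pow (fun k => by positivity) inv_factorial_sq_le (sq_nonneg _)
    (div_two_sq_le_div_two_sq hxy)

theorem besselI1Div_le_besselI1Div {x y : ℝ} (hxy : |x| ≤ |y|) :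
    besselI1Div x ≤ besselI1Div y :=
  tsum_mul_pow_le_tsum_mul_pow (fun k => by positivity) inv_factorial_mul_factorial_succ_le
    (sq_nonneg _) (div_two_sq_le_div_two_sq hxy)

section KernelBound

variable {b c x t : ℝ}

theorem abs_sq_sub_sq_le (hx : |x| ≤ b) (ht : |t| ≤ b) : |x ^ 2 - t ^ 2| ≤ b ^ 2 := by
  have hx2 : x ^ 2 ≤ b ^ 2 := by rw [← sq_abs]; exact pow_le_pow_left₀ (abs_nonneg x) hx 2
  have ht2 : t ^ 2 ≤ b ^ 2 := by rw [← sq_abs]; exact pow_le_pow_left₀ (abs_nonneg t) ht 2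
  exact abs_sub_le_of_nonneg_of_le (sq_nonneg x) hx2 (sq_nonneg t) ht2

theorem abs_sqrt_mul_abs_sq_sub_sq_le (hc : 0 ≤ c) (hx : |x| ≤ b) (ht : |t| ≤ b) :
    |√(c * |x ^ 2 - t ^ 2|)| ≤ |b * √c| := by
  have hb : 0 ≤ b := (abs_nonneg x).trans hx
  rw [abs_of_nonneg (Real.sqrt_nonneg _), abs_of_nonneg (mul_nonneg hb (Real.sqrt_nonneg c))]
  calc √(c * |x ^ 2 - t ^ 2|) ≤ √(c * b ^ 2) :=
        Real.sqrt_le_sqrt (mul_le_mul_of_nonneg_left (abs_sq_sub_sq_le hx ht) hc)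
    _ = b * √c := by
        rw [Real.sqrt_mul hc, Real.sqrt_sq hb, mul_comm]

theorem sqrt_mul_besselI1_div_le (hc : 0 ≤ c) (hx : |x| ≤ b) (ht : |t| ≤ b) (hxt : x ≠ t) :
    √(c * |x ^ 2 - t ^ 2|) * besselI1 √(c * |x ^ 2 - t ^ 2|) / |x - t|
      ≤ 2 * √c * besselI1 (b * √c) := by
  set s := √(c * |x ^ 2 - t ^ 2|)
  have hb : 0 ≤ b := (abs_nonneg x).trans hx
  have hs : s ^ 2 = c * |x + t| * |x - t| := by
    rw [Real.sq_sqrt (by positivity), sq_sub_sq, abs_mul, mul_assoc]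
  have hxt' : |x - t| ≠ 0 := abs_ne_zero.mpr (sub_ne_zero.mpr hxt)
  have hsum : |x + t| ≤ 2 * b := (abs_add_le x t).trans (by linarith)
  rw [besselI1_eq_mul_besselI1Div, besselI1_eq_mul_besselI1Div]
  calc s * (s / 2 * besselI1Div s) / |x - t| = c * |x + t| / 2 * besselI1Div s := by
        field_simp
        rw [hs]; ring
    _ ≤ c * b * besselI1Div (b * √c) := by
        have hcoef : c * |x + t| / 2 ≤ c * b := by nlinarith
        exact mul_le_mul hcoef
          (besselI1Div_le_besselI1Div (abs_sqrt_mul_abs_sq_sub_sq_le hc hx ht))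
          (besselI1Div_nonneg s) (by positivity)
    _ = 2 * √c * (b * √c / 2 * besselI1Div (b * √c)) := by
        linear_combination (-b * besselI1Div (b * √c)) * Real.mul_self_sqrt hc

end KernelBound

theorem norm_add_intervalIntegral_mul_le {A : Type*} [NormedRing A] [NormedSpace ℝ A]
    {u K : ℝ → A} {b x C M : ℝ} (hx : x ∈ Icc (-b) b) (hC : 0 ≤ C)
    (hK : ∀ t ∈ Icc (-b) b, t ≠ x → ‖K t‖ ≤ C) (hu : ∀ t ∈ Icc (-b) b, ‖u t‖ ≤ M) :
    ‖u x + ∫ t in (-x)..x, K t * u t‖ ≤ (1 + 2 * b * C) * M := by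
  have hM : 0 ≤ M := (norm_nonneg _).trans (hu x hx)
  have hsub : uIoc (-x) x ⊆ Icc (-b) b :=
    uIoc_subset_uIcc.trans (uIcc_subset_Icc ⟨by linarith [hx.2], by linarith [hx.1]⟩ hx)
  have hint : ‖∫ t in (-x)..x, K t * u t‖ ≤ C * M * |x - -x| := by
    refine intervalIntegral.norm_integral_le_of_norm_le_const_ae ?_
    filter_upwards [MeasureTheory.compl_mem_ae_iff.mpr (Real.volume_singleton (a := x))]
      with t htx ht
    exact (norm_mul_le _ _).trans
      (mul_le_mul (hK t (hsub ht) htx) (hu t (hsub ht)) (norm_nonneg _) hC)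
  have hlen : |x - -x| ≤ 2 * b := by
    rw [sub_neg_eq_add, ← two_mul, abs_mul, abs_two]
    linarith [abs_le.mpr hx]
  calc ‖u x + ∫ t in (-x)..x, K t * u t‖
        ≤ ‖u x‖ + ‖∫ t in (-x)..x, K t * u t‖ := norm_add_le _ _
    _ ≤ M + C * M * (2 * b) := add_le_add (hu x hx) (hint.trans (by gcongr))
    _ = (1 + 2 * b * C) * M := by ring

theorem stmt_17_general (b c : ℝ) (hc : 0 ≤ c) (h : ℂ) (K : ℝ → ℝ → ℂ)
    (hK : ∀ x t : ℝ, |x| ≤ b → |t| ≤ b → x ≠ t →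
      ‖K x t‖ ≤
        (‖h‖ / 2) * besselI0 (Real.sqrt (c * |x ^ 2 - t ^ 2|)) +
        (1 / 2) * Real.sqrt (c * |x ^ 2 - t ^ 2|) *
          besselI1 (Real.sqrt (c * |x ^ 2 - t ^ 2|)) / |x - t|) :
    ∀ u : ℝ → ℂ, Continuous u → ∀ M : ℝ,
      (∀ t ∈ Set.Icc (-b) b, ‖u t‖ ≤ M) →
      ∀ x ∈ Set.Icc (-b) b,
        ‖u x + ∫ t in (-x)..x, K x t * u t‖ ≤
          (1 + b * (‖h‖ * besselI0 (b * Real.sqrt c) +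
            2 * Real.sqrt c * besselI1 (b * Real.sqrt c))) * M := by
  intro u _ M hM x hx
  have hxb : |x| ≤ b := abs_le.mpr hx
  have hbc : 0 ≤ b * √c := mul_nonneg ((abs_nonneg x).trans hxb) (Real.sqrt_nonneg c)
  have hC : 0 ≤ ‖h‖ / 2 * besselI0 (b * √c) + √c * besselI1 (b * √c) :=
    add_nonneg (mul_nonneg (by positivity) (besselI0_nonneg _))
      (mul_nonneg (Real.sqrt_nonneg c) (besselI1_nonneg hbc))
  refine (norm_add_intervalIntegral_mul_le hx hC (fun t ht htx => ?_) hM).trans_eq (by ring)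
  have htb : |t| ≤ b := abs_le.mpr ht
  have hI1 := sqrt_mul_besselI1_div_le hc hxb htb htx.symm
  calc ‖K x t‖ ≤ _ := hK x t hxb htb htx.symm
    _ ≤ _ := by
      rw [mul_assoc, mul_div_assoc]
      refine add_le_add ?_ (by linarith)
      gcongr
      exact besselI0_le_besselI0 (abs_sqrt_mul_abs_sq_sub_sq_le hc hxb htb)

/-- Norm bound for the transmutation operator
`T u (x) = u x + ∫_{-x}^x K(x,t) u(t) dt` on `C[-b,b]`:
from the pointwise kernel estimate one gets
`‖T‖ ≤ 1 + b(|h| I₀(b√c) + 2√c I₁(b√c))`. -/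
theorem stmt_17 (b c : ℝ) (hb : 0 < b) (hc : 0 ≤ c) (h : ℂ) (K : ℝ → ℝ → ℂ)
    (hKcont : ContinuousOn (fun p : ℝ × ℝ => K p.1 p.2)
      (Set.Icc (-b) b ×ˢ Set.Icc (-b) b))
    (hK : ∀ x t : ℝ, |x| ≤ b → |t| ≤ b → x ≠ t →
      ‖K x t‖ ≤
        (‖h‖ / 2) * besselI0 (Real.sqrt (c * |x ^ 2 - t ^ 2|)) +
        (1 / 2) * Real.sqrt (c * |x ^ 2 - t ^ 2|) *
          besselI1 (Real.sqrt (c * |x ^ 2 - t ^ 2|)) / |x - t|) :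
    ∀ u : ℝ → ℂ, Continuous u → ∀ M : ℝ,
      (∀ t ∈ Set.Icc (-b) b, ‖u t‖ ≤ M) →
      ∀ x ∈ Set.Icc (-b) b,
        ‖u x + ∫ t in (-x)..x, K x t * u t‖ ≤
          (1 + b * (‖h‖ * besselI0 (b * Real.sqrt c) +
            2 * Real.sqrt c * besselI1 (b * Real.sqrt c))) * M :=
  stmt_17_general b c hc h K hK
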